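/- arXiv:2502.09632 — 2 statements merged into one kernel-verified Lean document; each statement's English description precedes it below -/
import Mathlib

section
/- Let ∇ act on smooth matrix-valued functions T : ℝ → Matrix (Fin n) (Fin n) ℝ by ∇T = T' + A*T - T*A. Then ∇^k T = Σ_{m+l+r=k} (k! / (m! · l! · r!)) · (P m) * T^{(r)} * (Q l), where the sum is over all m, l, r ≥ 0 with m+l+r = k, and P, Q are the recursively defined matrices. -/
open Matrix Finset

noncomputable def mderiv {n : ℕ} (M : ℝ → Matrix (Fin n) (Fin n) ℝ) :
    ℝ → Matrix (Fin n) (Fin n) ℝ :=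
  fun s => Matrix.of fun i j => deriv (fun t => M t i j) s

noncomputable def vderiv {n : ℕ} (Y : ℝ → Fin n → ℝ) : ℝ → Fin n → ℝ :=
  fun s i => deriv (fun t => Y t i) s

def MSmooth {n : ℕ} (M : ℝ → Matrix (Fin n) (Fin n) ℝ) : Prop :=
  ∀ i j, ContDiff ℝ (⊤ : ℕ∞) (fun s => M s i j)

def VSmooth {n : ℕ} (Y : ℝ → Fin n → ℝ) : Prop :=
  ∀ i, ContDiff ℝ (⊤ : ℕ∞) (fun s => Y s i)

noncomputable def Psym {n : ℕ} (A : ℝ → Matrix (Fin n) (Fin n) ℝ) :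
    ℕ → ℝ → Matrix (Fin n) (Fin n) ℝ
  | 0 => fun _ => 1
  | k + 1 => fun s => mderiv (Psym A k) s + A s * Psym A k s

noncomputable def Qsym {n : ℕ} (A : ℝ → Matrix (Fin n) (Fin n) ℝ) :
    ℕ → ℝ → Matrix (Fin n) (Fin n) ℝ
  | 0 => fun _ => 1
  | k + 1 => fun s => mderiv (Qsym A k) s - Qsym A k s * A s

noncomputable def mnabla {n : ℕ} (A : ℝ → Matrix (Fin n) (Fin n) ℝ)
    (T : ℝ → Matrix (Fin n) (Fin n) ℝ) : ℝ → Matrix (Fin n) (Fin n) ℝ :=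
  fun s => mderiv T s + A s * T s - T s * A s

section helpers
variable {n : ℕ}

lemma contDiff_deriv' {f : ℝ → ℝ} (h : ContDiff ℝ (⊤ : ℕ∞) f) : ContDiff ℝ (⊤ : ℕ∞) (deriv f) := by
  exact (contDiff_infty_iff_deriv.mp h).2

lemma MSmooth.mderiv' {M : ℝ → Matrix (Fin n) (Fin n) ℝ} (hM : MSmooth M) :
    MSmooth (mderiv M) := by
  intro i j
  have h : (fun s => mderiv M s i j) = deriv (fun t => M t i j) := by
    funext s; simp [mderiv]
  rw [h]; exact contDiff_deriv' (hM i j)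

lemma MSmooth.matmul {M N : ℝ → Matrix (Fin n) (Fin n) ℝ} (hM : MSmooth M) (hN : MSmooth N) :
    MSmooth (fun s => M s * N s) := by
  intro i j
  simp only [Matrix.mul_apply]
  exact ContDiff.sum fun x _ => (hM i x).mul (hN x j)

lemma MSmooth.madd {M N : ℝ → Matrix (Fin n) (Fin n) ℝ} (hM : MSmooth M) (hN : MSmooth N) :
    MSmooth (fun s => M s + N s) := by
  intro i j
  simp only [Matrix.add_apply]
  exact (hM i j).add (hN i j)

lemma MSmooth.msub {M N : ℝ → Matrix (Fin n) (Fin n) ℝ} (hM : MSmooth M) (hN : MSmooth N) :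
    MSmooth (fun s => M s - N s) := by
  intro i j
  simp only [Matrix.sub_apply]
  exact (hM i j).sub (hN i j)

lemma msmooth_one : MSmooth (fun _ : ℝ => (1 : Matrix (Fin n) (Fin n) ℝ)) :=
  fun _ _ => contDiff_const

lemma mderiv_matmul {M N : ℝ → Matrix (Fin n) (Fin n) ℝ} (hM : MSmooth M) (hN : MSmooth N)
    (s : ℝ) : mderiv (fun t => M t * N t) s = mderiv M s * N s + M s * mderiv N s := by
  ext i j
  have h : (fun t => (M t * N t) i j) = fun t => ∑ x, M t i x * N t x j := by
    funext t; simp [Matrix.mul_apply]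
  simp only [mderiv, of_apply, Matrix.add_apply, Matrix.mul_apply, h]
  rw [deriv_fun_sum (A := fun x t => M t i x * N t x j) (fun x _ => (((hM i x).differentiable (by simp) s).mul
    ((hN x j).differentiable (by simp) s)))]
  rw [← Finset.sum_add_distrib]
  refine Finset.sum_congr rfl fun x _ => ?_
  rw [deriv_fun_mul (((hM i x).differentiable (by simp) s))
    (((hN x j).differentiable (by simp) s))]

lemma mderiv_msum {ι : Type*} (u : Finset ι) (f : ι → ℝ → Matrix (Fin n) (Fin n) ℝ)
    (hf : ∀ x ∈ u, MSmooth (f x)) (s : ℝ) :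
    mderiv (fun t => ∑ x ∈ u, f x t) s = ∑ x ∈ u, mderiv (f x) s := by
  ext i j
  simp only [mderiv, of_apply, Matrix.sum_apply]
  exact deriv_fun_sum (fun x hx => ((hf x hx i j).differentiable (by simp) s))

lemma mderiv_msmul (c : ℝ) (f : ℝ → Matrix (Fin n) (Fin n) ℝ) (s : ℝ) :
    mderiv (fun t => c • f t) s = c • mderiv f s := by
  ext i j
  simp [mderiv, Matrix.smul_apply, smul_eq_mul, deriv_const_mul_field]

end helpers

def trip (k : ℕ) : Finset (ℕ × ℕ × ℕ) :=
  (Finset.range (k + 1) ×ˢ Finset.range (k + 1) ×ˢ Finset.range (k + 1)).filter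
    (fun x : ℕ × ℕ × ℕ => x.1 + x.2.1 + x.2.2 = k)

lemma mem_trip {k : ℕ} {x : ℕ × ℕ × ℕ} :
    x ∈ trip k ↔ x.1 + x.2.1 + x.2.2 = k := by
  simp only [trip, Finset.mem_filter, Finset.mem_product, Finset.mem_range]
  omega

section shifts
variable {M : Type*} [AddCommMonoid M]

lemma shift1 (k : ℕ) (f : ℕ × ℕ × ℕ → M) (h0 : ∀ x ∈ trip (k+1), x.1 = 0 → f x = 0) :
    ∑ x ∈ trip (k+1), f x = ∑ x ∈ trip k, f (x.1 + 1, x.2.1, x.2.2) := by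
  rw [← Finset.sum_filter_of_ne (p := fun x : ℕ × ℕ × ℕ => x.1 ≠ 0)
    (fun x hx hfx h => hfx (h0 x hx h))]
  refine (Finset.sum_nbij' (i := fun x : ℕ × ℕ × ℕ => (x.1 + 1, x.2.1, x.2.2))
    (j := fun x : ℕ × ℕ × ℕ => (x.1 - 1, x.2.1, x.2.2)) ?_ ?_ ?_ ?_ ?_).symm
  · intro a ha
    obtain ⟨a1, a2, a3⟩ := a
    simp only [Finset.mem_filter, mem_trip] at *
    omega
  · intro a ha
    obtain ⟨a1, a2, a3⟩ := a
    simp only [Finset.mem_filter, mem_trip] at *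
    omega
  · intro a ha
    obtain ⟨a1, a2, a3⟩ := a
    simp only [Prod.mk.injEq, and_true, true_and, eq_self_iff_true]
    omega
  · intro a ha
    obtain ⟨a1, a2, a3⟩ := a
    simp only [Finset.mem_filter, mem_trip] at ha
    simp only [Prod.mk.injEq, and_true, true_and, eq_self_iff_true]
    omega
  · intro a _
    rfl

lemma shift2 (k : ℕ) (f : ℕ × ℕ × ℕ → M) (h0 : ∀ x ∈ trip (k+1), x.2.1 = 0 → f x = 0) :
    ∑ x ∈ trip (k+1), f x = ∑ x ∈ trip k, f (x.1, x.2.1 + 1, x.2.2) := by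
  rw [← Finset.sum_filter_of_ne (p := fun x : ℕ × ℕ × ℕ => x.2.1 ≠ 0)
    (fun x hx hfx h => hfx (h0 x hx h))]
  refine (Finset.sum_nbij' (i := fun x : ℕ × ℕ × ℕ => (x.1, x.2.1 + 1, x.2.2))
    (j := fun x : ℕ × ℕ × ℕ => (x.1, x.2.1 - 1, x.2.2)) ?_ ?_ ?_ ?_ ?_).symm
  · intro a ha
    obtain ⟨a1, a2, a3⟩ := a
    simp only [Finset.mem_filter, mem_trip] at *
    omega
  · intro a ha
    obtain ⟨a1, a2, a3⟩ := a
    simp only [Finset.mem_filter, mem_trip] at *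
    omega
  · intro a ha
    obtain ⟨a1, a2, a3⟩ := a
    simp only [Prod.mk.injEq, and_true, true_and, eq_self_iff_true]
    omega
  · intro a ha
    obtain ⟨a1, a2, a3⟩ := a
    simp only [Finset.mem_filter, mem_trip] at ha
    simp only [Prod.mk.injEq, and_true, true_and, eq_self_iff_true]
    omega
  · intro a _
    rfl

lemma shift3 (k : ℕ) (f : ℕ × ℕ × ℕ → M) (h0 : ∀ x ∈ trip (k+1), x.2.2 = 0 → f x = 0) :
    ∑ x ∈ trip (k+1), f x = ∑ x ∈ trip k, f (x.1, x.2.1, x.2.2 + 1) := by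
  rw [← Finset.sum_filter_of_ne (p := fun x : ℕ × ℕ × ℕ => x.2.2 ≠ 0)
    (fun x hx hfx h => hfx (h0 x hx h))]
  refine (Finset.sum_nbij' (i := fun x : ℕ × ℕ × ℕ => (x.1, x.2.1, x.2.2 + 1))
    (j := fun x : ℕ × ℕ × ℕ => (x.1, x.2.1, x.2.2 - 1)) ?_ ?_ ?_ ?_ ?_).symm
  · intro a ha
    obtain ⟨a1, a2, a3⟩ := a
    simp only [Finset.mem_filter, mem_trip] at *
    omega
  · intro a ha
    obtain ⟨a1, a2, a3⟩ := a
    simp only [Finset.mem_filter, mem_trip] at *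
    omega
  · intro a ha
    obtain ⟨a1, a2, a3⟩ := a
    simp only [Prod.mk.injEq, and_true, true_and, eq_self_iff_true]
    omega
  · intro a ha
    obtain ⟨a1, a2, a3⟩ := a
    simp only [Finset.mem_filter, mem_trip] at ha
    simp only [Prod.mk.injEq, and_true, true_and, eq_self_iff_true]
    omega
  · intro a _
    rfl

end shifts

lemma coeff_split (k m l r : ℕ) (h : m + l + r = k + 1) :
    ((k+1).factorial : ℝ) / (m.factorial * l.factorial * r.factorial) =
      (k.factorial * m) / (m.factorial * l.factorial * r.factorial)
      + (k.factorial * l) / (m.factorial * l.factorial * r.factorial)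
      + (k.factorial * r) / (m.factorial * l.factorial * r.factorial) := by
  have h1 : ((k+1).factorial : ℝ) = ((m : ℝ) + l + r) * k.factorial := by
    rw [Nat.factorial_succ]
    push_cast [← h]
    ring
  rw [h1]; ring

lemma cs1 {k m l r : ℕ} : ((k.factorial : ℝ) * ((m + 1 : ℕ) : ℝ))
      / ((m + 1).factorial * l.factorial * r.factorial)
    = (k.factorial : ℝ) / (m.factorial * l.factorial * r.factorial) := by
  have h1 : ((m.factorial : ℝ)) ≠ 0 := Nat.cast_ne_zero.2 m.factorial_ne_zero
  have h2 : ((l.factorial : ℝ)) ≠ 0 := Nat.cast_ne_zero.2 l.factorial_ne_zero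
  have h3 : ((r.factorial : ℝ)) ≠ 0 := Nat.cast_ne_zero.2 r.factorial_ne_zero
  have h4 : ((m : ℝ) + 1) ≠ 0 := by positivity
  rw [Nat.factorial_succ]
  push_cast
  field_simp

lemma cs2 {k m l r : ℕ} : ((k.factorial : ℝ) * ((l + 1 : ℕ) : ℝ))
      / (m.factorial * (l + 1).factorial * r.factorial)
    = (k.factorial : ℝ) / (m.factorial * l.factorial * r.factorial) := by
  have h1 : ((m.factorial : ℝ)) ≠ 0 := Nat.cast_ne_zero.2 m.factorial_ne_zero
  have h2 : ((l.factorial : ℝ)) ≠ 0 := Nat.cast_ne_zero.2 l.factorial_ne_zero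
  have h3 : ((r.factorial : ℝ)) ≠ 0 := Nat.cast_ne_zero.2 r.factorial_ne_zero
  have h4 : ((l : ℝ) + 1) ≠ 0 := by positivity
  rw [Nat.factorial_succ]
  push_cast
  field_simp

lemma cs3 {k m l r : ℕ} : ((k.factorial : ℝ) * ((r + 1 : ℕ) : ℝ))
      / (m.factorial * l.factorial * (r + 1).factorial)
    = (k.factorial : ℝ) / (m.factorial * l.factorial * r.factorial) := by
  have h1 : ((m.factorial : ℝ)) ≠ 0 := Nat.cast_ne_zero.2 m.factorial_ne_zero
  have h2 : ((l.factorial : ℝ)) ≠ 0 := Nat.cast_ne_zero.2 l.factorial_ne_zero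
  have h3 : ((r.factorial : ℝ)) ≠ 0 := Nat.cast_ne_zero.2 r.factorial_ne_zero
  have h4 : ((r : ℝ) + 1) ≠ 0 := by positivity
  rw [Nat.factorial_succ]
  push_cast
  field_simp

section main
variable {n : ℕ}

lemma msmooth_psym {A : ℝ → Matrix (Fin n) (Fin n) ℝ} (hA : MSmooth A) (k : ℕ) :
    MSmooth (Psym A k) := by
  induction k with
  | zero => exact msmooth_one
  | succ k ih =>
    show MSmooth (fun s => mderiv (Psym A k) s + A s * Psym A k s)
    exact ih.mderiv'.madd (hA.matmul ih)

lemma msmooth_qsym {A : ℝ → Matrix (Fin n) (Fin n) ℝ} (hA : MSmooth A) (k : ℕ) :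
    MSmooth (Qsym A k) := by
  induction k with
  | zero => exact msmooth_one
  | succ k ih =>
    show MSmooth (fun s => mderiv (Qsym A k) s - Qsym A k s * A s)
    exact ih.mderiv'.msub (ih.matmul hA)

lemma msmooth_iter {T : ℝ → Matrix (Fin n) (Fin n) ℝ} (hT : MSmooth T) (r : ℕ) :
    MSmooth (mderiv^[r] T) := by
  induction r with
  | zero => exact hT
  | succ r ih =>
    rw [Function.iterate_succ_apply']
    exact ih.mderiv'

end main

noncomputable def Xt {n : ℕ} (A T : ℝ → Matrix (Fin n) (Fin n) ℝ) (x : ℕ × ℕ × ℕ) :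
    ℝ → Matrix (Fin n) (Fin n) ℝ :=
  fun s => Psym A x.1 s * mderiv^[x.2.2] T s * Qsym A x.2.1 s

noncomputable def cf (k : ℕ) (x : ℕ × ℕ × ℕ) : ℝ :=
  (k.factorial : ℝ) / (x.1.factorial * x.2.1.factorial * x.2.2.factorial)

section main2
variable {n : ℕ}

lemma msmooth_X {A T : ℝ → Matrix (Fin n) (Fin n) ℝ} (hA : MSmooth A) (hT : MSmooth T)
    (x : ℕ × ℕ × ℕ) : MSmooth (Xt A T x) :=
  ((msmooth_psym hA x.1).matmul (msmooth_iter hT x.2.2)).matmul (msmooth_qsym hA x.2.1)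

lemma step_term {A T : ℝ → Matrix (Fin n) (Fin n) ℝ} (hA : MSmooth A) (hT : MSmooth T)
    (x : ℕ × ℕ × ℕ) (s : ℝ) :
    mderiv (Xt A T x) s + A s * Xt A T x s - Xt A T x s * A s
      = Xt A T (x.1 + 1, x.2.1, x.2.2) s + Xt A T (x.1, x.2.1 + 1, x.2.2) s
        + Xt A T (x.1, x.2.1, x.2.2 + 1) s := by
  obtain ⟨m, l, r⟩ := x
  have hP := msmooth_psym hA (A := A) m
  have hTr := msmooth_iter hT (T := T) r
  have hQ := msmooth_qsym hA (A := A) l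
  have h1 : mderiv (Xt A T (m, l, r)) s
      = (mderiv (Psym A m) s * mderiv^[r] T s + Psym A m s * mderiv (mderiv^[r] T) s)
          * Qsym A l s
        + (Psym A m s * mderiv^[r] T s) * mderiv (Qsym A l) s := by
    rw [show Xt A T (m, l, r)
        = fun t => (fun u => Psym A m u * mderiv^[r] T u) t * Qsym A l t from rfl]
    rw [mderiv_matmul (hP.matmul hTr) hQ, mderiv_matmul hP hTr]
  rw [h1]
  show _ = Psym A (m + 1) s * mderiv^[r] T s * Qsym A l s
      + Psym A m s * mderiv^[r] T s * Qsym A (l + 1) s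
      + Psym A m s * mderiv^[r + 1] T s * Qsym A l s
  rw [Function.iterate_succ_apply' mderiv r T]
  simp only [Psym, Qsym, Xt]
  noncomm_ring

lemma key {A T : ℝ → Matrix (Fin n) (Fin n) ℝ} (hA : MSmooth A) (hT : MSmooth T) (k : ℕ) :
    ∀ s : ℝ, (mnabla A)^[k] T s = ∑ x ∈ trip k, cf k x • Xt A T x s := by
  induction k with
  | zero =>
    intro s
    rw [show trip 0 = {(0, 0, 0)} by decide]
    simp [Xt, cf, Psym, Qsym]
  | succ k ih =>
    intro s
    have hG : (mnabla A)^[k] T = fun t => ∑ x ∈ trip k, cf k x • Xt A T x t := funext ih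
    rw [Function.iterate_succ_apply', hG]
    have hs : ∀ x ∈ trip k, MSmooth (fun t => cf k x • Xt A T x t) := by
      intro x _ i j
      simp only [Matrix.smul_apply, smul_eq_mul]
      exact contDiff_const.mul (msmooth_X hA hT x i j)
    have lhs_eq : mnabla A (fun t => ∑ x ∈ trip k, cf k x • Xt A T x t) s
        = ∑ x ∈ trip k, cf k x • (Xt A T (x.1 + 1, x.2.1, x.2.2) s
            + Xt A T (x.1, x.2.1 + 1, x.2.2) s + Xt A T (x.1, x.2.1, x.2.2 + 1) s) := by
      simp only [mnabla]
      rw [mderiv_msum (trip k) (fun x t => cf k x • Xt A T x t) hs s]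
      rw [Finset.mul_sum, Finset.sum_mul, ← Finset.sum_add_distrib, ← Finset.sum_sub_distrib]
      refine Finset.sum_congr rfl fun x hx => ?_
      rw [mderiv_msmul (cf k x) (Xt A T x) s, mul_smul_comm, smul_mul_assoc,
        ← smul_add, ← smul_sub, step_term hA hT x s]
    rw [lhs_eq]
    -- now transform the RHS
    have split : ∀ x ∈ trip (k + 1), cf (k + 1) x • Xt A T x s
        = ((k.factorial * x.1 : ℝ) / (x.1.factorial * x.2.1.factorial * x.2.2.factorial))
            • Xt A T x s
          + ((k.factorial * x.2.1 : ℝ) / (x.1.factorial * x.2.1.factorial * x.2.2.factorial))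
            • Xt A T x s
          + ((k.factorial * x.2.2 : ℝ) / (x.1.factorial * x.2.1.factorial * x.2.2.factorial))
            • Xt A T x s := by
      intro x hx
      rw [← add_smul, ← add_smul, ← coeff_split k x.1 x.2.1 x.2.2 (mem_trip.mp hx)]
      rfl
    rw [Finset.sum_congr rfl split, Finset.sum_add_distrib, Finset.sum_add_distrib]
    rw [shift1 k (fun x => ((k.factorial * x.1 : ℝ)
        / (x.1.factorial * x.2.1.factorial * x.2.2.factorial)) • Xt A T x s)
      (fun x _ h => by simp [h]),
      shift2 k (fun x => ((k.factorial * x.2.1 : ℝ)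
        / (x.1.factorial * x.2.1.factorial * x.2.2.factorial)) • Xt A T x s)
      (fun x _ h => by simp [h]),
      shift3 k (fun x => ((k.factorial * x.2.2 : ℝ)
        / (x.1.factorial * x.2.1.factorial * x.2.2.factorial)) • Xt A T x s)
      (fun x _ h => by simp [h])]
    rw [← Finset.sum_add_distrib, ← Finset.sum_add_distrib]
    refine (Finset.sum_congr rfl fun x _ => ?_).symm
    obtain ⟨m, l, r⟩ := x
    dsimp only
    rw [smul_add, smul_add, cs1, cs2, cs3]
    simp only [cf]

end main2

theorem stmt7 {n : ℕ} (A : ℝ → Matrix (Fin n) (Fin n) ℝ) (hA : MSmooth A)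
    (T : ℝ → Matrix (Fin n) (Fin n) ℝ) (hT : MSmooth T) (k : ℕ) (s : ℝ) :
    (mnabla A)^[k] T s =
      ∑ x ∈ (Finset.range (k + 1) ×ˢ Finset.range (k + 1) ×ˢ Finset.range (k + 1)).filter
          (fun x : ℕ × ℕ × ℕ => x.1 + x.2.1 + x.2.2 = k),
        ((k.factorial : ℝ) / (x.1.factorial * x.2.1.factorial * x.2.2.factorial)) •
          (Psym A x.1 s * mderiv^[x.2.2] T s * Qsym A x.2.1 s) := by
  exact key hA hT k s
end

section
/- Suppose Φ : ℝ → Matrix (Fin n) (Fin n) ℝ is smooth, Φ(s) is invertible for all s, and Φ' = -A * Φ. Then the recursively defined matrices satisfy P k = Φ * (Φ⁻¹)^{(k)} for all k ≥ 0, where (Φ⁻¹)^{(k)} is the entrywise k-th derivative of s ↦ Φ(s)⁻¹. -/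
open Matrix Finset

lemma msmooth_det {n : ℕ} {M : ℝ → Matrix (Fin n) (Fin n) ℝ} (hM : MSmooth M) :
    ContDiff ℝ (⊤ : ℕ∞) (fun s => (M s).det) := by
  have : (fun s => (M s).det)
      = fun s => ∑ σ : Equiv.Perm (Fin n), ((Equiv.Perm.sign σ : ℤ) : ℝ) * ∏ i, M s (σ i) i := by
    funext s
    rw [Matrix.det_apply]
    simp [Units.smul_def, zsmul_eq_mul]
  rw [this]
  exact ContDiff.sum fun σ _ => contDiff_const.mul (contDiff_prod fun i _ => hM (σ i) i)

lemma msmooth_inv {n : ℕ} {Φ : ℝ → Matrix (Fin n) (Fin n) ℝ} (hΦ : MSmooth Φ)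
    (hinv : ∀ s, IsUnit (Φ s)) : MSmooth (fun s => (Φ s)⁻¹) := by
  intro i j
  have hdet0 : ∀ s, (Φ s).det ≠ 0 := fun s =>
    ((Matrix.isUnit_iff_isUnit_det _).mp (hinv s)).ne_zero
  have hadj : ContDiff ℝ (⊤ : ℕ∞) fun s => (Φ s).adjugate i j := by
    have : (fun s => (Φ s).adjugate i j)
        = fun s => ((Φ s).updateRow j (Pi.single i 1)).det := by
      funext s; rw [Matrix.adjugate_apply]
    rw [this]
    refine msmooth_det (fun k l => ?_)
    by_cases hk : k = j
    · simp only [Matrix.updateRow_apply, if_pos hk]; exact contDiff_const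
    · simpa [Matrix.updateRow_apply, hk] using hΦ k l
  have : (fun s => (Φ s)⁻¹ i j) = fun s => ((Φ s).det)⁻¹ * (Φ s).adjugate i j := by
    funext s
    rw [Matrix.inv_def]
    simp [Ring.inverse_eq_inv']
  rw [this]
  exact ((msmooth_det hΦ).inv hdet0).mul hadj

lemma msmooth_mderiv {n : ℕ} {M : ℝ → Matrix (Fin n) (Fin n) ℝ} (hM : MSmooth M) :
    MSmooth (mderiv M) := by
  intro i j
  have h : ContDiff ℝ (((⊤ : ℕ∞) : WithTop ℕ∞) + 1) (fun s => M s i j) := by exact (hM i j).of_le (by exact_mod_cast le_top)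
  exact (contDiff_succ_iff_deriv.mp h).2.2

lemma msmooth_iterate {n : ℕ} {M : ℝ → Matrix (Fin n) (Fin n) ℝ} (hM : MSmooth M) (k : ℕ) :
    MSmooth (mderiv^[k] M) := by
  induction k with
  | zero => exact hM
  | succ k ih => rw [Function.iterate_succ_apply']; exact msmooth_mderiv ih

lemma mderiv_mul {n : ℕ} {M N : ℝ → Matrix (Fin n) (Fin n) ℝ} (hM : MSmooth M) (hN : MSmooth N)
    (s : ℝ) : mderiv (fun t => M t * N t) s = mderiv M s * N s + M s * mderiv N s := by
  ext i j
  have h1 : (fun t => (M t * N t) i j) = fun t => ∑ l, M t i l * N t l j := by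
    funext t; simp [Matrix.mul_apply]
  have hd : ∀ l (t : ℝ), DifferentiableAt ℝ (fun u => M u i l * N u l j) t := fun l t =>
    (((hM i l).differentiable (by simp)) t).mul (((hN l j).differentiable (by simp)) t)
  simp only [mderiv, Matrix.of_apply, Matrix.add_apply, Matrix.mul_apply, h1]
  rw [deriv_fun_sum (fun l _ => hd l s)]
  rw [← Finset.sum_add_distrib]
  congr 1
  funext l
  rw [deriv_fun_mul (((hM i l).differentiable (by simp)) s) (((hN l j).differentiable (by simp)) s)]

theorem stmt9 {n : ℕ} (A : ℝ → Matrix (Fin n) (Fin n) ℝ) (hA : MSmooth A)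
    (Φ : ℝ → Matrix (Fin n) (Fin n) ℝ) (hΦ : MSmooth Φ)
    (hinv : ∀ s, IsUnit (Φ s)) (hode : ∀ s, mderiv Φ s = -(A s * Φ s)) :
    ∀ (k : ℕ) (s : ℝ), Psym A k s = Φ s * mderiv^[k] (fun t => (Φ t)⁻¹) s := by
  have hdet : ∀ s, IsUnit (Φ s).det := fun s => (Matrix.isUnit_iff_isUnit_det _).mp (hinv s)
  have hD : MSmooth (fun t => (Φ t)⁻¹) := msmooth_inv hΦ hinv
  intro k
  induction k with
  | zero =>
    intro s
    simp only [Psym, Function.iterate_zero, id_eq]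
    exact (Matrix.mul_nonsing_inv _ (hdet s)).symm
  | succ k ih =>
    intro s
    have hDk : MSmooth (mderiv^[k] fun t => (Φ t)⁻¹) := msmooth_iterate hD k
    have hP : Psym A k = fun t => Φ t * mderiv^[k] (fun u => (Φ u)⁻¹) t := funext ih
    show mderiv (Psym A k) s + A s * Psym A k s = _
    rw [hP, mderiv_mul hΦ hDk s, hode s, Function.iterate_succ_apply']
    set D := mderiv^[k] (fun t => (Φ t)⁻¹)
    noncomm_ring
end
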